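/- arXiv:2507.20184 — 2 statements merged into one kernel-verified Lean document; each statement's English description precedes it below -/
import Mathlib

section
/- Let 0 < a₁ < a₂ < ⋯ < a_N < π. If q¹, q² ∈ L²(0,π) give rise to the same characteristic function Δ_N^{(1,0)}(λ) for all λ = ρ², then q̂ := q¹ − q² satisfies the identity (∫₀^π sin(ρ(π−t)) q̂(t) dt)·(∑_{i=1}^N cos(ρ a_i)) = cos(ρπ)·(∑_{i=1}^N ∫₀^{a_i} sin(ρ(a_i−t)) q̂(t) dt) for all ρ ∈ ℂ. -/
/-!
Of the columns of `charMatrix`, only the second depends on `q`. Expanding along the last row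
reduces the determinant to two "arrow" minors, whose determinants are `±` the sum of their first
column (add all rows to the first one). Hence, with `v` the first column and `w` the second,
`Δ = w_N ∑_{i<N} v_i - v_N ∑_{i<N} w_i`, which is affine in `w`. Equality of the two
characteristic functions at `ρ ≠ 0` is therefore, after multiplying by `ρ`, the claimed identity;
at `ρ = 0` both sides vanish.
-/

open MeasureTheory

/-- The characteristic determinant matrix `Δ_N^{(1,0)}` for the Sturm–Liouville
problem with `N` frozen arguments, boundary conditions `y'(0) = y(π) = 0`. -/
noncomputable def charMatrix (N : ℕ) (a : Fin N → ℝ) (q : ℝ → ℝ) (ρ : ℂ) :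
    Matrix (Fin (N + 1)) (Fin (N + 1)) ℂ := fun i j =>
  if hi : (i : ℕ) < N then
    if (j : ℕ) = 0 then Complex.cos (ρ * (a ⟨i, hi⟩ : ℝ))
    else if (j : ℕ) = 1 then
      (∫ t in (0:ℝ)..(a ⟨i, hi⟩), (q t : ℂ) * Complex.sin (ρ * ((a ⟨i, hi⟩ : ℝ) - t)) / ρ)
        - (if (i : ℕ) = 0 then 1 else 0)
    else if (i : ℕ) = 0 then 1
    else if (j : ℕ) = (i : ℕ) + 1 then -1 else 0
  else
    if (j : ℕ) = 0 then Complex.cos (ρ * (Real.pi : ℝ))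
    else if (j : ℕ) = 1 then
      ∫ t in (0:ℝ)..Real.pi, (q t : ℂ) * Complex.sin (ρ * ((Real.pi : ℝ) - t)) / ρ
    else 0

namespace Matrix

variable {R : Type*} [CommRing R]

def arrowMatrix {n : ℕ} (x : Fin (n + 1) → R) : Matrix (Fin (n + 1)) (Fin (n + 1)) R :=
  of fun i j => if j = 0 then x i else if i = 0 then 1 else if j = i then -1 else 0

theorem det_arrowMatrix {n : ℕ} (x : Fin (n + 1) → R) :
    (arrowMatrix x).det = (-1) ^ n * ∑ i, x i := by
  -- Adding all rows to row 0 clears it outside column 0 and leaves a lower triangular matrix.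
  have hsum : ∑ k, arrowMatrix x k = Pi.single 0 (∑ i, x i) := by
    funext j
    refine (Finset.sum_apply j Finset.univ fun k => arrowMatrix x k).trans ?_
    rcases eq_or_ne j 0 with rfl | hj
    · simp [arrowMatrix]
    · obtain ⟨j, rfl⟩ := Fin.exists_succ_eq.2 hj
      simp [arrowMatrix, Fin.sum_univ_succ, Fin.succ_ne_zero]
  have hL : ((arrowMatrix x).updateRow 0 (∑ k, arrowMatrix x k)).IsLowerTriangular := by
    intro i j (hij : i < j)
    rcases eq_or_ne i 0 with rfl | hi
    · simp [hsum, hij.ne']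
    · simp [arrowMatrix, hi, ((Fin.pos_of_ne_zero hi).trans hij).ne', hij.ne']
  have hdet := det_updateRow_sum (arrowMatrix x) 0 1
  simp only [Pi.one_apply, one_smul] at hdet
  rw [← hdet, det_of_isLowerTriangular _ hL, Fin.prod_univ_succ, hsum]
  simp [arrowMatrix, Fin.succ_ne_zero, mul_comm]

def borderedMatrix {n : ℕ} (v w : Fin (n + 2) → R) : Matrix (Fin (n + 2)) (Fin (n + 2)) R :=
  of fun i j =>
    if j = 0 then v i else if j = 1 then w i
    else if i = 0 then 1 else if (j : ℕ) = i + 1 then -1 else 0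

theorem det_borderedMatrix {n : ℕ} (v w : Fin (n + 2) → R) :
    (borderedMatrix v w).det = w (Fin.last _) * ∑ i : Fin (n + 1), v i.castSucc
      - v (Fin.last _) * ∑ i : Fin (n + 1), w i.castSucc := by
  have hsucc (k : Fin n) (i : Fin (n + 1)) : (k : ℕ) + 1 = i ↔ k.succ = i := by
    rw [Fin.ext_iff, Fin.val_succ]
  have hv : (borderedMatrix v w).submatrix Fin.castSucc (Fin.succAbove 1) =
      arrowMatrix (v ∘ Fin.castSucc) := by
    ext i j
    cases j using Fin.cases <;>
      simp [borderedMatrix, arrowMatrix, Fin.succAbove, Fin.succ_succ_ne_one, hsucc]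
  have hw : (borderedMatrix v w).submatrix Fin.castSucc Fin.succ =
      arrowMatrix (w ∘ Fin.castSucc) := by
    ext i j
    cases j using Fin.cases <;> simp [borderedMatrix, arrowMatrix, Fin.succ_succ_ne_one, hsucc]
  -- The last row is `(v last, w last, 0, …, 0)`; both of its minors are arrow matrices.
  rw [det_succ_row _ (Fin.last _), Fin.sum_univ_succ, Fin.sum_univ_succ, Finset.sum_eq_zero]
  · simp only [Fin.succAbove_last, Fin.succAbove_zero, Fin.succ_zero_eq_one, hv, hw,
      det_arrowMatrix]
    have hsign : ((-1 : R) ^ n) * (-1) ^ n = 1 := by rw [← mul_pow]; simp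
    simp only [Fin.val_last, Fin.coe_ofNat_eq_mod, Nat.zero_mod, add_zero, borderedMatrix,
      of_apply, ↓reduceIte, Function.comp_apply, Nat.one_mod, one_ne_zero]
    linear_combination (w (Fin.last _) * ∑ i : Fin (n + 1), v i.castSucc
      - v (Fin.last _) * ∑ i : Fin (n + 1), w i.castSucc) * hsign
  · intro j _
    simp [borderedMatrix, Fin.succ_succ_ne_one, j.isLt.ne]

end Matrix

theorem MeasureTheory.MemLp.intervalIntegrable_of_restrict_Ioo {E : Type*}
    [NormedAddCommGroup E] {f : ℝ → E} {p : ENNReal} {a b c d : ℝ} (hp : 1 ≤ p)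
    (hf : MemLp f p (volume.restrict (Set.Ioo a b))) (hac : a ≤ c) (hcd : c ≤ d) (hdb : d ≤ b) :
    IntervalIntegrable f volume c d := by
  have : IsFiniteMeasure (volume.restrict (Set.Ioo a b)) :=
    isFiniteMeasure_restrict.2 (by simp)
  have hint : IntegrableOn f (Set.Ioo a b) := hf.integrable hp
  exact (intervalIntegrable_iff_integrableOn_Ioo_of_le hcd).2
    (hint.mono_set (Set.Ioo_subset_Ioo hac hdb))

noncomputable def sinKernelIntegral (q : ℝ → ℝ) (ρ : ℂ) (c : ℝ) : ℂ :=
  ∫ t in (0:ℝ)..c, (q t : ℂ) * Complex.sin (ρ * ((c : ℝ) - t)) / ρ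

theorem sinKernelIntegral_sub {q₁ q₂ : ℝ → ℝ} {c : ℝ}
    (h₁ : IntervalIntegrable (fun t => (q₁ t : ℂ)) volume 0 c)
    (h₂ : IntervalIntegrable (fun t => (q₂ t : ℂ)) volume 0 c) (ρ : ℂ) :
    sinKernelIntegral q₁ ρ c - sinKernelIntegral q₂ ρ c =
      (∫ t in (0:ℝ)..c, Complex.sin (ρ * ((c : ℝ) - t)) * ((q₁ t : ℂ) - (q₂ t : ℂ))) / ρ := by
  have hsin : ContinuousOn (fun t : ℝ => Complex.sin (ρ * ((c : ℝ) - t))) (Set.uIcc 0 c) := by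
    fun_prop
  rw [sinKernelIntegral, sinKernelIntegral, intervalIntegral.integral_div,
    intervalIntegral.integral_div, div_sub_div_same,
    ← intervalIntegral.integral_sub (h₁.mul_continuousOn hsin) (h₂.mul_continuousOn hsin)]
  congr 1
  refine intervalIntegral.integral_congr fun t _ => ?_
  ring

theorem charMatrix_eq_borderedMatrix (n : ℕ) (a : Fin (n + 1) → ℝ) (q : ℝ → ℝ) (ρ : ℂ) :
    charMatrix (n + 1) a q ρ =
      Matrix.borderedMatrix
        (Fin.snoc (fun i => Complex.cos (ρ * (a i : ℝ))) (Complex.cos (ρ * (Real.pi : ℝ))))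
        (Fin.snoc (fun i => sinKernelIntegral q ρ (a i) - if i = 0 then 1 else 0)
          (sinKernelIntegral q ρ Real.pi)) := by
  ext i j
  have hone : (j : ℕ) = 1 ↔ j = 1 := by rw [Fin.ext_iff, Fin.val_one]
  cases i using Fin.lastCases with
  | last => simp [charMatrix, Matrix.borderedMatrix, sinKernelIntegral, hone, j.isLt.ne]
  | cast i => simp [charMatrix, Matrix.borderedMatrix, sinKernelIntegral, hone, Fin.is_le]

theorem det_charMatrix_sub (n : ℕ) (a : Fin (n + 1) → ℝ) (q₁ q₂ : ℝ → ℝ) (ρ : ℂ) :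
    (charMatrix (n + 1) a q₁ ρ).det - (charMatrix (n + 1) a q₂ ρ).det =
      (sinKernelIntegral q₁ ρ Real.pi - sinKernelIntegral q₂ ρ Real.pi) *
          ∑ i, Complex.cos (ρ * (a i : ℝ))
        - Complex.cos (ρ * (Real.pi : ℝ)) *
          ∑ i, (sinKernelIntegral q₁ ρ (a i) - sinKernelIntegral q₂ ρ (a i)) := by
  simp only [charMatrix_eq_borderedMatrix, Matrix.det_borderedMatrix, Fin.snoc_castSucc,
    Fin.snoc_last, Finset.sum_sub_distrib]
  ring

theorem same_char_function_imp_integral_identity_general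
    (N : ℕ) (hN : 1 ≤ N) (a : Fin N → ℝ)
    (ha0 : ∀ i, 0 < a i) (haπ : ∀ i, a i < Real.pi)
    (q1 q2 : ℝ → ℝ)
    (hq1 : MemLp q1 2 (volume.restrict (Set.Ioo 0 Real.pi)))
    (hq2 : MemLp q2 2 (volume.restrict (Set.Ioo 0 Real.pi)))
    (hchar : ∀ ρ : ℂ, ρ ≠ 0 →
      (charMatrix N a q1 ρ).det = (charMatrix N a q2 ρ).det) :
    ∀ ρ : ℂ,
      (∫ t in (0:ℝ)..Real.pi,
          Complex.sin (ρ * ((Real.pi : ℝ) - t)) * ((q1 t : ℂ) - (q2 t : ℂ))) *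
        (∑ i, Complex.cos (ρ * (a i : ℝ)))
      = Complex.cos (ρ * (Real.pi : ℝ)) *
        (∑ i, ∫ t in (0:ℝ)..(a i),
          Complex.sin (ρ * ((a i : ℝ) - t)) * ((q1 t : ℂ) - (q2 t : ℂ))) := by
  intro ρ
  rcases eq_or_ne ρ 0 with rfl | hρ
  · simp
  obtain ⟨n, rfl⟩ : ∃ n, N = n + 1 := ⟨N - 1, by omega⟩
  have hdiff {c : ℝ} (hc0 : 0 ≤ c) (hcπ : c ≤ Real.pi) :
      sinKernelIntegral q1 ρ c - sinKernelIntegral q2 ρ c =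
        (∫ t in (0:ℝ)..c, Complex.sin (ρ * ((c : ℝ) - t)) * ((q1 t : ℂ) - (q2 t : ℂ))) / ρ :=
    sinKernelIntegral_sub
      (hq1.ofReal.intervalIntegrable_of_restrict_Ioo one_le_two le_rfl hc0 hcπ)
      (hq2.ofReal.intervalIntegrable_of_restrict_Ioo one_le_two le_rfl hc0 hcπ) ρ
  have hdet := sub_eq_zero.2 (hchar ρ hρ)
  rw [det_charMatrix_sub, hdiff Real.pi_pos.le le_rfl,
    Finset.sum_congr rfl fun i _ => hdiff (ha0 i).le (haπ i).le, ← Finset.sum_div] at hdet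
  field_simp at hdet
  linear_combination hdet

theorem same_char_function_imp_integral_identity
    (N : ℕ) (hN : 1 ≤ N) (a : Fin N → ℝ)
    (ha0 : ∀ i, 0 < a i) (haπ : ∀ i, a i < Real.pi) (hmono : StrictMono a)
    (q1 q2 : ℝ → ℝ)
    (hq1 : MemLp q1 2 (volume.restrict (Set.Ioo 0 Real.pi)))
    (hq2 : MemLp q2 2 (volume.restrict (Set.Ioo 0 Real.pi)))
    (hchar : ∀ ρ : ℂ, ρ ≠ 0 →
      (charMatrix N a q1 ρ).det = (charMatrix N a q2 ρ).det) :
    ∀ ρ : ℂ,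
      (∫ t in (0:ℝ)..Real.pi,
          Complex.sin (ρ * ((Real.pi : ℝ) - t)) * ((q1 t : ℂ) - (q2 t : ℂ))) *
        (∑ i, Complex.cos (ρ * (a i : ℝ)))
      = Complex.cos (ρ * (Real.pi : ℝ)) *
        (∑ i, ∫ t in (0:ℝ)..(a i),
          Complex.sin (ρ * ((a i : ℝ) - t)) * ((q1 t : ℂ) - (q2 t : ℂ))) :=
  same_char_function_imp_integral_identity_general N hN a ha0 haπ q1 q2 hq1 hq2 hchar
end

section
/- Let 0 < a₁ < ⋯ < a_N < π, and let q̂ ∈ L²(0,π) be real-valued satisfying the identity (∫₀^π sin(ρ(π−t)) q̂(t) dt)·(∑_{i=1}^N cos(ρ a_i)) = cos(ρπ)·(∑_{i=1}^N ∫₀^{a_i} sin(ρ(a_i−t)) q̂(t) dt) for all ρ ∈ ℂ. If ∑_{i=1}^N cos(ρ a_i) ≠ 0 for every ρ ∈ ℂ, then q̂ = 0 almost everywhere. -/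
/-!
At a zero `ρ = n + 1/2` of `cos (ρ π)` the identity, together with the nonvanishing of the
cosine sum, gives `∫₀^π sin (ρ (π - t)) q t dt = sin (ρ π) ∫₀^π cos (ρ t) q t dt = 0`, so `q` is
orthogonal to every `cos ((n + 1/2) t)`. Multiplying the even extension of `q` to `(-π, π)` by
`e^{-it/2}` turns these integrals into its Fourier coefficients on `(-π, π]`, which therefore all
vanish; by Parseval the function is zero almost everywhere.
-/

open MeasureTheory Set
open scoped Real

namespace Complex

theorem cos_int_add_half_mul_pi (n : ℤ) : cos ((n + 1 / 2 : ℂ) * π) = 0 :=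
  cos_eq_zero_iff.2 ⟨n, by ring⟩

theorem sin_int_add_half_mul_pi_ne_zero (n : ℤ) : sin ((n + 1 / 2 : ℂ) * π) ≠ 0 := by
  intro hsin
  have hpyth := sin_sq_add_cos_sq ((n + 1 / 2 : ℂ) * π)
  rw [hsin, cos_int_add_half_mul_pi] at hpyth
  norm_num at hpyth

theorem intervalIntegral_sin_mul_sub_mul {ρ : ℂ} {a b : ℝ} (hρ : cos (ρ * b) = 0)
    (f : ℝ → ℂ) :
    ∫ t in a..b, sin (ρ * (b - t)) * f t = sin (ρ * b) * ∫ t in a..b, cos (ρ * t) * f t := by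
  simp only [mul_sub, sin_sub, hρ, zero_mul, sub_zero, mul_assoc,
    intervalIntegral.integral_const_mul]

end Complex

theorem ae_restrict_eq_zero_of_fourierCoeffOn_eq_zero {a b : ℝ} (hab : a < b) {f : ℝ → ℂ}
    (hf : MemLp f 2 (volume.restrict (Ioc a b))) (h : ∀ n, fourierCoeffOn hab f n = 0) :
    f =ᵐ[volume.restrict (Ioc a b)] 0 := by
  have hparseval := hasSum_sq_fourierCoeffOn hab hf
  simp only [h, norm_zero, ne_eq, OfNat.ofNat_ne_zero, not_false_eq_true, zero_pow]
    at hparseval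
  have hnorm : ∫ x in Ioc a b, ‖f x‖ ^ 2 = 0 := by
    rw [← intervalIntegral.integral_of_le hab.le]
    simpa [(sub_pos.2 hab).ne'] using hasSum_zero.unique hparseval
  have hnorm_ae := (integral_eq_zero_iff_of_nonneg (fun x => by positivity)
    (hf.integrable_norm_pow two_ne_zero)).1 hnorm
  filter_upwards [hnorm_ae] with x hx
  simpa using hx

noncomputable def evenExtension (c : ℝ) (f : ℝ → ℂ) (x : ℝ) : ℂ :=
  (Ioo 0 c).indicator f x + (Ioo 0 c).indicator f (-x)

section EvenExtension

variable {c : ℝ} {f : ℝ → ℂ}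

theorem evenExtension_of_mem {x : ℝ} (hx : x ∈ Ioo 0 c) : evenExtension c f x = f x := by
  have hx' : -x ∉ Ioo 0 c := fun h => by linarith [h.1, hx.1]
  simp [evenExtension, indicator_of_mem hx, indicator_of_notMem hx']

theorem memLp_evenExtension {p : ENNReal} (hf : MemLp f p (volume.restrict (Ioo 0 c)))
    (s : Set ℝ) : MemLp (evenExtension c f) p (volume.restrict s) := by
  have hI : MemLp ((Ioo 0 c).indicator f) p volume :=
    (memLp_indicator_iff_restrict measurableSet_Ioo).2 hf
  exact (hI.add (hI.comp_measurePreserving (Measure.measurePreserving_neg volume))).restrict s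

theorem intervalIntegral_mul_indicator_Ioo {g : ℝ → ℂ} {a b : ℝ} (ha : a ≤ 0) (hb : c ≤ b)
    (hc : 0 ≤ c) :
    ∫ x in a..b, g x * (Ioo 0 c).indicator f x = ∫ x in 0..c, g x * f x := by
  have hmul : (fun x => g x * (Ioo 0 c).indicator f x)
      = (Ioo 0 c).indicator (fun x => g x * f x) := by
    ext x
    by_cases hx : x ∈ Ioo 0 c <;> simp [hx]
  rw [intervalIntegral.integral_of_le (ha.trans (hc.trans hb)),
    intervalIntegral.integral_of_le hc, hmul, setIntegral_indicator measurableSet_Ioo,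
    inter_eq_self_of_subset_right (Ioo_subset_Ioc_self.trans (Ioc_subset_Ioc ha hb)),
    integral_Ioc_eq_integral_Ioo]

theorem intervalIntegral_mul_evenExtension {g : ℝ → ℂ} (hg : Continuous g)
    (hf : IntegrableOn f (Ioo 0 c)) (hc : 0 ≤ c) :
    ∫ x in -c..c, g x * evenExtension c f x = ∫ x in 0..c, (g x + g (-x)) * f x := by
  set fI := (Ioo 0 c).indicator f
  have hfI : Integrable fI := (integrable_indicator_iff measurableSet_Ioo).2 hf
  have hint : ∀ {φ h : ℝ → ℂ}, Integrable φ → Continuous h →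
      IntervalIntegrable (fun x => h x * φ x) volume (-c) c :=
    fun hφ hh => hφ.intervalIntegrable.continuousOn_mul hh.continuousOn
  have hneg : ∫ x in -c..c, g x * fI (-x) = ∫ x in -c..c, g (-x) * fI x := by
    simpa using intervalIntegral.integral_comp_neg (fun x => g (-x) * fI x) (a := -c) (b := c)
  simp only [evenExtension, mul_add]
  rw [intervalIntegral.integral_add (hint hfI hg) (hint hfI.comp_neg hg), hneg,
    ← intervalIntegral.integral_add (hint hfI hg) (hint (h := fun x => g (-x)) hfI (by fun_prop))]
  simp only [← add_mul]
  exact intervalIntegral_mul_indicator_Ioo (neg_nonpos.2 hc) le_rfl hc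

end EvenExtension

open Complex in
theorem ae_eq_zero_of_integral_cos_int_add_half_mul_eq_zero {f : ℝ → ℂ}
    (hf : MemLp f 2 (volume.restrict (Ioo 0 π)))
    (h : ∀ n : ℤ, ∫ x in 0..π, cos ((n + 1 / 2 : ℂ) * x) * f x = 0) :
    f =ᵐ[volume.restrict (Ioo 0 π)] 0 := by
  have hπ := Real.pi_pos
  set F : ℝ → ℂ := fun x => exp (-(x / 2 : ℂ) * I) * evenExtension π f x
  have hF : MemLp F 2 (volume.restrict (Ioc (-π) π)) := by
    have hE := memLp_evenExtension hf (Ioc (-π) π)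
    have hnorm : ∀ x : ℝ, ‖F x‖ = ‖evenExtension π f x‖ := fun x => by
      simp [F, Complex.norm_exp]
    refine hE.of_le_mul (c := 1) ?_ (.of_forall fun x => by rw [hnorm, one_mul])
    exact (Continuous.aestronglyMeasurable (by fun_prop)).mul hE.aestronglyMeasurable
  have hcoeff : ∀ n : ℤ, fourierCoeffOn (neg_lt_self hπ) F n = 0 := fun n => by
    have hfourier : ∀ x : ℝ, fourier (-n) (x : AddCircle (π - -π)) • F x
        = exp (-((n + 1 / 2 : ℂ) * x) * I) * evenExtension π f x := fun x => by
      rw [fourier_coe_apply, smul_eq_mul, ← mul_assoc, ← Complex.exp_add]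
      congr 2
      field_simp
      push_cast
      ring
    have hcos : ∀ x : ℝ, exp (-((n + 1 / 2 : ℂ) * x) * I) + exp ((n + 1 / 2 : ℂ) * x * I)
        = 2 * cos ((n + 1 / 2 : ℂ) * x) := fun x => by
      rw [two_cos, add_comm]
    rw [fourierCoeffOn_eq_integral, intervalIntegral.integral_congr fun x _ => hfourier x,
      intervalIntegral_mul_evenExtension (by fun_prop) (hf.integrable one_le_two) hπ.le]
    simp only [Complex.ofReal_neg, mul_neg, neg_neg, hcos]
    simp only [mul_assoc]
    rw [intervalIntegral.integral_const_mul, h n, mul_zero, smul_zero]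
  have hF0 : F =ᵐ[volume.restrict (Ioo 0 π)] 0 :=
    ae_restrict_of_ae_restrict_of_subset
      (Ioo_subset_Ioc_self.trans (Ioc_subset_Ioc_left (by linarith)))
      (ae_restrict_eq_zero_of_fourierCoeffOn_eq_zero (neg_lt_self hπ) hF hcoeff)
  filter_upwards [hF0, ae_restrict_mem measurableSet_Ioo] with x hFx hx
  simpa [F, evenExtension_of_mem hx, Complex.exp_ne_zero] using hFx

theorem uniqueness_from_nonvanishing_cos_sum_general
    (N : ℕ) (a : Fin N → ℝ)
    (q : ℝ → ℝ)
    (hq : MemLp q 2 (volume.restrict (Set.Ioo 0 Real.pi)))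
    (hid : ∀ ρ : ℂ,
      (∫ t in (0:ℝ)..Real.pi,
          Complex.sin (ρ * ((Real.pi : ℝ) - t)) * (q t : ℂ)) *
        (∑ i, Complex.cos (ρ * (a i : ℝ)))
      = Complex.cos (ρ * (Real.pi : ℝ)) *
        (∑ i, ∫ t in (0:ℝ)..(a i),
          Complex.sin (ρ * ((a i : ℝ) - t)) * (q t : ℂ)))
    (hnz : ∀ ρ : ℂ, (∑ i, Complex.cos (ρ * (a i : ℝ))) ≠ 0) :
    q =ᵐ[volume.restrict (Set.Ioo 0 Real.pi)] 0 := by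
  have hcos : ∀ n : ℤ, ∫ t in 0..π, Complex.cos ((n + 1 / 2 : ℂ) * t) * (q t : ℂ) = 0 :=
    fun n => by
      have hidn := hid (n + 1 / 2)
      rw [Complex.cos_int_add_half_mul_pi, zero_mul,
        Complex.intervalIntegral_sin_mul_sub_mul (Complex.cos_int_add_half_mul_pi n)] at hidn
      exact (mul_eq_zero.1 ((mul_eq_zero.1 hidn).resolve_right (hnz _))).resolve_left
        (Complex.sin_int_add_half_mul_pi_ne_zero n)
  filter_upwards [ae_eq_zero_of_integral_cos_int_add_half_mul_eq_zero hq.ofReal hcos] with x hx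
  simpa using hx

theorem uniqueness_from_nonvanishing_cos_sum
    (N : ℕ) (a : Fin N → ℝ)
    (ha0 : ∀ i, 0 < a i) (haπ : ∀ i, a i < Real.pi) (hmono : StrictMono a)
    (q : ℝ → ℝ)
    (hq : MemLp q 2 (volume.restrict (Set.Ioo 0 Real.pi)))
    (hid : ∀ ρ : ℂ,
      (∫ t in (0:ℝ)..Real.pi,
          Complex.sin (ρ * ((Real.pi : ℝ) - t)) * (q t : ℂ)) *
        (∑ i, Complex.cos (ρ * (a i : ℝ)))
      = Complex.cos (ρ * (Real.pi : ℝ)) *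
        (∑ i, ∫ t in (0:ℝ)..(a i),
          Complex.sin (ρ * ((a i : ℝ) - t)) * (q t : ℂ)))
    (hnz : ∀ ρ : ℂ, (∑ i, Complex.cos (ρ * (a i : ℝ))) ≠ 0) :
    q =ᵐ[volume.restrict (Set.Ioo 0 Real.pi)] 0 :=
  uniqueness_from_nonvanishing_cos_sum_general N a q hq hid hnz
end
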